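/- arXiv:math/0403108 — 2 statements merged into one kernel-verified Lean document; each statement's English description precedes it below -/
import Mathlib

section
/- Let α = (α₁, α₂) : I → ℂ² be a curve of type (3) with initial condition α(0) = (a₁, a₂), and suppose ρ_j : I → (0, ∞) and θ_j : I → ℝ are differentiable functions with α_j(t) = ρ_j(t)·exp(i·θ_j(t)) for j = 1, 2 and θ_j(0) = 0. Then each θ_j is strictly increasing on I, and for every t ∈ I with t ≠ 0 one has |α_j(t)| > a_j for j = 1, 2 (i.e., t = 0 is the unique critical point of ρ_j and is a strict global minimum). -/
private lemma conj_hasDerivAt' {α : ℝ → ℂ} {d : ℂ} {t : ℝ} (h : HasDerivAt α d t) :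
    HasDerivAt (fun s => (starRingEnd ℂ) (α s)) ((starRingEnd ℂ) d) t := by
  simpa [Function.comp_def] using (Complex.conjCLE.toContinuousLinearMap.hasFDerivAt.comp_hasDerivAt t h)

private lemma re_hasDerivAt' {α : ℝ → ℂ} {d : ℂ} {t : ℝ} (h : HasDerivAt α d t) :
    HasDerivAt (fun s => (α s).re) d.re t := by
  simpa [Function.comp_def] using (Complex.reCLM.hasFDerivAt.comp_hasDerivAt t h)

private lemma im_hasDerivAt' {α : ℝ → ℂ} {d : ℂ} {t : ℝ} (h : HasDerivAt α d t) :
    HasDerivAt (fun s => (α s).im) d.im t := by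
  simpa [Function.comp_def] using (Complex.imCLM.hasFDerivAt.comp_hasDerivAt t h)

private lemma pow_hasDerivAt' {α : ℝ → ℂ} {d : ℂ} {t : ℝ} (h : HasDerivAt α d t) (n : ℕ) :
    HasDerivAt (fun s => α s ^ n) ((n : ℂ) * α t ^ (n - 1) * d) t := by
  induction n with
  | zero => simpa using hasDerivAt_const t (1 : ℂ)
  | succ n ih =>
    have h2 : HasDerivAt (fun s => α s ^ n * α s) _ t := ih.mul h
    have h3 : (fun s => α s ^ n * α s) = fun s => α s ^ (n + 1) := by
      funext s; rw [← pow_succ]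
    rw [h3] at h2
    convert h2 using 1
    cases n with
    | zero => simp
    | succ m =>
      simp only [Nat.succ_sub_one]
      push_cast
      ring

private lemma normSq_hasDerivAt' {α : ℝ → ℂ} {t : ℝ} (h : DifferentiableAt ℝ α t) :
    HasDerivAt (fun s => Complex.normSq (α s))
      (2 * (deriv α t * (starRingEnd ℂ) (α t)).re) t := by
  have hα := h.hasDerivAt
  have hm : HasDerivAt (fun s => α s * (starRingEnd ℂ) (α s)) _ t := hα.mul (conj_hasDerivAt' hα)
  have hre := re_hasDerivAt' hm
  have heq : (fun s => (α s * (starRingEnd ℂ) (α s)).re) = fun s => Complex.normSq (α s) := by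
    funext s; simp [Complex.mul_conj]
  rw [heq] at hre
  convert hre using 1
  simp [Complex.add_re, Complex.mul_re, Complex.conj_re, Complex.conj_im]
  ring

private lemma polar_mul_conj' {α : ℝ → ℂ} {ρ θ : ℝ → ℝ} {t : ℝ}
    (hρ : DifferentiableAt ℝ ρ t) (hθ : DifferentiableAt ℝ θ t)
    (hpo : ∀ᶠ s in nhds t, α s = (ρ s : ℂ) * Complex.exp (Complex.I * (θ s : ℂ))) :
    deriv α t * (starRingEnd ℂ) (α t) =
      ((ρ t * deriv ρ t : ℝ) : ℂ) + Complex.I * ((ρ t ^ 2 * deriv θ t : ℝ) : ℂ) := by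
  have hρ' : HasDerivAt (fun s => ((ρ s : ℝ) : ℂ)) ((deriv ρ t : ℝ) : ℂ) t := by
    simpa [Function.comp_def] using Complex.ofRealCLM.hasFDerivAt.comp_hasDerivAt t hρ.hasDerivAt
  have hθ' : HasDerivAt (fun s => ((θ s : ℝ) : ℂ)) ((deriv θ t : ℝ) : ℂ) t := by
    simpa [Function.comp_def] using Complex.ofRealCLM.hasFDerivAt.comp_hasDerivAt t hθ.hasDerivAt
  have hexp : HasDerivAt (fun s => Complex.exp (Complex.I * (θ s : ℂ)))
      (Complex.exp (Complex.I * (θ t : ℂ)) * (Complex.I * ((deriv θ t : ℝ) : ℂ))) t :=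
    (hθ'.const_mul Complex.I).cexp
  have hφ := hρ'.mul hexp
  have hα : HasDerivAt α
      (((deriv ρ t : ℝ) : ℂ) * Complex.exp (Complex.I * (θ t : ℂ)) +
        (ρ t : ℂ) * (Complex.exp (Complex.I * (θ t : ℂ)) * (Complex.I * ((deriv θ t : ℝ) : ℂ)))) t :=
    hφ.congr_of_eventuallyEq hpo
  have hconj : (starRingEnd ℂ) (α t) = (ρ t : ℂ) * Complex.exp (-(Complex.I * (θ t : ℂ))) := by
    rw [hpo.self_of_nhds, map_mul, Complex.conj_ofReal, ← Complex.exp_conj]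
    congr 1
    simp [Complex.conj_ofReal]
  have hEE : Complex.exp (Complex.I * (θ t : ℂ)) * Complex.exp (-(Complex.I * (θ t : ℂ))) = 1 := by
    rw [← Complex.exp_add]; simp
  rw [hα.deriv, hconj]
  push_cast
  linear_combination ((ρ t : ℂ) * ((deriv ρ t : ℝ) : ℂ) + Complex.I * (ρ t : ℂ) ^ 2 * ((deriv θ t : ℝ) : ℂ)) * hEE

/-- the angles `θ_j` are strictly increasing and `t = 0` is a strict global
minimum of `|α_j|`. -/
theorem stmt_4 (p q : ℕ) (a₁ a₂ : ℝ) (ha₁ : 0 < a₁) (ha₂ : 0 < a₂)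
    (I : Set ℝ) (hIopen : IsOpen I) (hIconn : I.OrdConnected) (hI0 : (0 : ℝ) ∈ I)
    (α₁ α₂ : ℝ → ℂ)
    (hne : ∀ t ∈ I, α₁ t ≠ 0 ∧ α₂ t ≠ 0)
    (hdiff : ∀ t ∈ I, DifferentiableAt ℝ α₁ t ∧ DifferentiableAt ℝ α₂ t)
    (hode₁ : ∀ t ∈ I, deriv α₁ t * (starRingEnd ℂ) (α₁ t) =
      Complex.I * ((starRingEnd ℂ) (α₁ t)) ^ (p + 1) * ((starRingEnd ℂ) (α₂ t)) ^ (q + 1))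
    (hode₂ : ∀ t ∈ I, deriv α₂ t * (starRingEnd ℂ) (α₂ t) =
      Complex.I * ((starRingEnd ℂ) (α₁ t)) ^ (p + 1) * ((starRingEnd ℂ) (α₂ t)) ^ (q + 1))
    (hinit₁ : α₁ 0 = (a₁ : ℂ)) (hinit₂ : α₂ 0 = (a₂ : ℂ))
    (ρ₁ ρ₂ θ₁ θ₂ : ℝ → ℝ)
    (hρpos : ∀ t ∈ I, 0 < ρ₁ t ∧ 0 < ρ₂ t)
    (hρθdiff : ∀ t ∈ I, DifferentiableAt ℝ ρ₁ t ∧ DifferentiableAt ℝ ρ₂ t ∧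
      DifferentiableAt ℝ θ₁ t ∧ DifferentiableAt ℝ θ₂ t)
    (hpolar₁ : ∀ t ∈ I, α₁ t = (ρ₁ t : ℂ) * Complex.exp (Complex.I * (θ₁ t : ℂ)))
    (hpolar₂ : ∀ t ∈ I, α₂ t = (ρ₂ t : ℂ) * Complex.exp (Complex.I * (θ₂ t : ℂ)))
    (hθ₁0 : θ₁ 0 = 0) (hθ₂0 : θ₂ 0 = 0) :
    StrictMonoOn θ₁ I ∧ StrictMonoOn θ₂ I ∧
    (∀ t ∈ I, t ≠ 0 → a₁ < ‖α₁ t‖ ∧ a₂ < ‖α₂ t‖) := by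
  have hconv : Convex ℝ I := hIconn.convex
  set β : ℝ → ℂ := fun t => α₁ t ^ (p + 1) * α₂ t ^ (q + 1) with hβdef
  -- derivative of β
  have hβD : ∀ t ∈ I, HasDerivAt β
      ((((p : ℂ) + 1) * α₁ t ^ p * deriv α₁ t) * α₂ t ^ (q + 1)
        + α₁ t ^ (p + 1) * (((q : ℂ) + 1) * α₂ t ^ q * deriv α₂ t)) t := by
    intro t ht
    have h1 := (hdiff t ht).1.hasDerivAt
    have h2 := (hdiff t ht).2.hasDerivAt
    have h1p : HasDerivAt (fun s => α₁ s ^ (p + 1))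
        (((p : ℂ) + 1) * α₁ t ^ p * deriv α₁ t) t := by
      simpa using pow_hasDerivAt' h1 (p + 1)
    have h2p : HasDerivAt (fun s => α₂ s ^ (q + 1))
        (((q : ℂ) + 1) * α₂ t ^ q * deriv α₂ t) t := by
      simpa using pow_hasDerivAt' h2 (q + 1)
    exact h1p.mul h2p
  have hβdiff : ∀ t ∈ I, DifferentiableAt ℝ β t := fun t ht => (hβD t ht).differentiableAt
  -- conj of β
  have hcb : ∀ t, (starRingEnd ℂ) (β t) =
      ((starRingEnd ℂ) (α₁ t)) ^ (p + 1) * ((starRingEnd ℂ) (α₂ t)) ^ (q + 1) := by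
    intro t; simp [hβdef]
  -- key algebraic identity
  have hkeyA : ∀ t ∈ I, deriv β t * (α₁ t * (starRingEnd ℂ) (α₁ t)) *
      (α₂ t * (starRingEnd ℂ) (α₂ t)) =
      Complex.I * (((p : ℂ) + 1) * (α₂ t * (starRingEnd ℂ) (α₂ t)) +
        ((q : ℂ) + 1) * (α₁ t * (starRingEnd ℂ) (α₁ t))) * (β t * (starRingEnd ℂ) (β t)) := by
    intro t ht
    rw [(hβD t ht).deriv, hcb t]
    have h1 := hode₁ t ht
    have h2 := hode₂ t ht
    push_cast
    linear_combination (((p : ℂ) + 1) * α₁ t ^ (p + 1) * α₂ t ^ (q + 2) *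
        (starRingEnd ℂ) (α₂ t)) * h1 +
      (((q : ℂ) + 1) * α₁ t ^ (p + 2) * (starRingEnd ℂ) (α₁ t) * α₂ t ^ (q + 1)) * h2
  -- real version
  have hkeyB : ∀ t ∈ I, deriv β t * ((Complex.normSq (α₁ t) * Complex.normSq (α₂ t) : ℝ) : ℂ) =
      Complex.I * ((((p : ℝ) + 1) * Complex.normSq (α₂ t) + ((q : ℝ) + 1) * Complex.normSq (α₁ t))
        * Complex.normSq (β t) : ℝ) := by
    intro t ht
    have h := hkeyA t ht
    rw [Complex.mul_conj, Complex.mul_conj, Complex.mul_conj] at h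
    push_cast
    push_cast at h
    linear_combination h
  have hns₁ : ∀ t ∈ I, 0 < Complex.normSq (α₁ t) := fun t ht =>
    Complex.normSq_pos.2 (hne t ht).1
  have hns₂ : ∀ t ∈ I, 0 < Complex.normSq (α₂ t) := fun t ht =>
    Complex.normSq_pos.2 (hne t ht).2
  have hnsβ : ∀ t ∈ I, 0 < Complex.normSq (β t) := by
    intro t ht
    exact Complex.normSq_pos.2 (mul_ne_zero (pow_ne_zero _ (hne t ht).1)
      (pow_ne_zero _ (hne t ht).2))
  -- real and imaginary parts of deriv β
  have hre : ∀ t ∈ I, (deriv β t).re = 0 := by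
    intro t ht
    have h : (deriv β t).re * (Complex.normSq (α₁ t) * Complex.normSq (α₂ t)) = 0 := by
      have h0 := congrArg Complex.re (hkeyB t ht)
      simp only [Complex.mul_re, Complex.ofReal_re, Complex.ofReal_im, Complex.I_re,
        Complex.I_im, mul_zero, zero_mul, sub_zero, zero_sub, one_mul, neg_zero] at h0
      linarith
    have hmul : 0 < Complex.normSq (α₁ t) * Complex.normSq (α₂ t) :=
      mul_pos (hns₁ t ht) (hns₂ t ht)
    exact (mul_eq_zero.1 h).resolve_right hmul.ne'
  have him : ∀ t ∈ I, 0 < (deriv β t).im := by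
    intro t ht
    have h : (deriv β t).im * (Complex.normSq (α₁ t) * Complex.normSq (α₂ t)) =
        (((p : ℝ) + 1) * Complex.normSq (α₂ t) + ((q : ℝ) + 1) * Complex.normSq (α₁ t))
          * Complex.normSq (β t) := by
      have h0 := congrArg Complex.im (hkeyB t ht)
      simp only [Complex.mul_im, Complex.ofReal_re, Complex.ofReal_im, Complex.I_re,
        Complex.I_im, mul_zero, zero_mul, add_zero, zero_add, one_mul] at h0
      linarith
    have hpos : 0 < (((p : ℝ) + 1) * Complex.normSq (α₂ t) +
        ((q : ℝ) + 1) * Complex.normSq (α₁ t)) * Complex.normSq (β t) := by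
      have := hns₁ t ht; have := hns₂ t ht; have := hnsβ t ht; positivity
    have hmul : 0 < Complex.normSq (α₁ t) * Complex.normSq (α₂ t) :=
      mul_pos (hns₁ t ht) (hns₂ t ht)
    nlinarith [h, hpos, hmul]
  -- u = Re β is constant; v = Im β is strictly monotone
  have hucont : ContinuousOn (fun s => (β s).re) I := fun t ht =>
    ((re_hasDerivAt' (hβdiff t ht).hasDerivAt).continuousAt).continuousWithinAt
  have hvcont : ContinuousOn (fun s => (β s).im) I := fun t ht =>
    ((im_hasDerivAt' (hβdiff t ht).hasDerivAt).continuousAt).continuousWithinAt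
  have hβ0 : β 0 = ((a₁ ^ (p + 1) * a₂ ^ (q + 1) : ℝ) : ℂ) := by
    show α₁ 0 ^ (p + 1) * α₂ 0 ^ (q + 1) = _
    rw [hinit₁, hinit₂]
    push_cast
    ring
  set c₀ : ℝ := a₁ ^ (p + 1) * a₂ ^ (q + 1) with hc₀def
  have hc₀pos : 0 < c₀ := by positivity
  have hu : ∀ t ∈ I, (β t).re = c₀ := by
    intro t ht
    have hudiff : DifferentiableOn ℝ (fun s => (β s).re) I := fun s hs =>
      (re_hasDerivAt' (hβdiff s hs).hasDerivAt).differentiableAt.differentiableWithinAt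
    have hfd : ∀ x ∈ I, fderivWithin ℝ (fun s => (β s).re) I x = 0 := by
      intro x hx
      have h0 : HasFDerivAt (fun s => (β s).re) (0 : ℝ →L[ℝ] ℝ) x := by
        have h1 := (re_hasDerivAt' (hβdiff x hx).hasDerivAt)
        rw [hre x hx] at h1
        have h2 := h1.hasFDerivAt
        have h3 : (ContinuousLinearMap.toSpanSingleton ℝ (0 : ℝ)) = 0 := by
          ext; simp
        rwa [h3] at h2
      exact h0.hasFDerivWithinAt.fderivWithin (hIopen.uniqueDiffWithinAt hx)
    have := hconv.is_const_of_fderivWithin_eq_zero hudiff hfd ht hI0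
    rw [this, hβ0]
    simp
  have hvmono : StrictMonoOn (fun s => (β s).im) I := by
    apply strictMonoOn_of_deriv_pos hconv hvcont
    intro x hx
    rw [hIopen.interior_eq] at hx
    rw [(im_hasDerivAt' (hβdiff x hx).hasDerivAt).deriv]
    exact him x hx
  have hv0 : (β 0).im = 0 := by rw [hβ0]; simp
  have hvpos : ∀ t ∈ I, 0 < t → 0 < (β t).im := by
    intro t ht h0
    have := hvmono hI0 ht h0
    simpa [hv0] using this
  have hvneg : ∀ t ∈ I, t < 0 → (β t).im < 0 := by
    intro t ht h0
    have := hvmono ht hI0 h0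
    simpa [hv0] using this
  -- derivative of normSq of α_j
  have hd₁ : ∀ t ∈ I, deriv α₁ t * (starRingEnd ℂ) (α₁ t) = Complex.I * (starRingEnd ℂ) (β t) := by
    intro t ht; rw [hcb t, ← mul_assoc]; exact hode₁ t ht
  have hd₂ : ∀ t ∈ I, deriv α₂ t * (starRingEnd ℂ) (α₂ t) = Complex.I * (starRingEnd ℂ) (β t) := by
    intro t ht; rw [hcb t, ← mul_assoc]; exact hode₂ t ht
  have hreIm : ∀ t, (Complex.I * (starRingEnd ℂ) (β t)).re = (β t).im := by
    intro t; simp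
  have himRe : ∀ t, (Complex.I * (starRingEnd ℂ) (β t)).im = (β t).re := by
    intro t; simp
  have hn₁D : ∀ t ∈ I, HasDerivAt (fun s => Complex.normSq (α₁ s)) (2 * (β t).im) t := by
    intro t ht
    have := normSq_hasDerivAt' (hdiff t ht).1
    rwa [hd₁ t ht, hreIm t] at this
  have hn₂D : ∀ t ∈ I, HasDerivAt (fun s => Complex.normSq (α₂ s)) (2 * (β t).im) t := by
    intro t ht
    have := normSq_hasDerivAt' (hdiff t ht).2
    rwa [hd₂ t ht, hreIm t] at this
  -- strict minimum of normSq at 0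
  have hmin : ∀ (α : ℝ → ℂ), (∀ t ∈ I, HasDerivAt (fun s => Complex.normSq (α s))
      (2 * (β t).im) t) → ∀ t ∈ I, t ≠ 0 → Complex.normSq (α 0) < Complex.normSq (α t) := by
    intro α hD t ht ht0
    have hcont : ContinuousOn (fun s => Complex.normSq (α s)) I := fun s hs =>
      (hD s hs).continuousAt.continuousWithinAt
    rcases ht0.lt_or_gt with h | h
    · -- t < 0 : strictly anti on I ∩ Iic 0
      have hsub : interior (I ∩ Set.Iic (0 : ℝ)) ⊆ I ∩ Set.Iio 0 := by
        rw [interior_inter, hIopen.interior_eq, interior_Iic]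
      have hanti : StrictAntiOn (fun s => Complex.normSq (α s)) (I ∩ Set.Iic 0) := by
        apply strictAntiOn_of_deriv_neg (hconv.inter (convex_Iic 0))
          (hcont.mono Set.inter_subset_left)
        intro x hx
        have hx' := hsub hx
        rw [(hD x hx'.1).deriv]
        have := hvneg x hx'.1 hx'.2
        linarith
      exact hanti ⟨ht, Set.mem_Iic.2 h.le⟩ ⟨hI0, Set.mem_Iic.2 le_rfl⟩ h
    · -- 0 < t : strictly mono on I ∩ Ici 0
      have hsub : interior (I ∩ Set.Ici (0 : ℝ)) ⊆ I ∩ Set.Ioi 0 := by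
        rw [interior_inter, hIopen.interior_eq, interior_Ici]
      have hmono : StrictMonoOn (fun s => Complex.normSq (α s)) (I ∩ Set.Ici 0) := by
        apply strictMonoOn_of_deriv_pos (hconv.inter (convex_Ici 0))
          (hcont.mono Set.inter_subset_left)
        intro x hx
        have hx' := hsub hx
        rw [(hD x hx'.1).deriv]
        have := hvpos x hx'.1 hx'.2
        linarith
      exact hmono ⟨hI0, Set.mem_Ici.2 le_rfl⟩ ⟨ht, Set.mem_Ici.2 h.le⟩ h
  -- θ derivative facts
  have hθD₁ : ∀ t ∈ I, ρ₁ t ^ 2 * deriv θ₁ t = c₀ := by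
    intro t ht
    have hpo : ∀ᶠ s in nhds t, α₁ s = (ρ₁ s : ℂ) * Complex.exp (Complex.I * (θ₁ s : ℂ)) :=
      Filter.eventually_of_mem (hIopen.mem_nhds ht) (fun s hs => hpolar₁ s hs)
    have h := polar_mul_conj' (hρθdiff t ht).1 (hρθdiff t ht).2.2.1 hpo
    rw [hd₁ t ht] at h
    have := congrArg Complex.im h.symm
    simpa [himRe t, hu t ht, ← Complex.ofReal_pow] using this
  have hθD₂ : ∀ t ∈ I, ρ₂ t ^ 2 * deriv θ₂ t = c₀ := by
    intro t ht
    have hpo : ∀ᶠ s in nhds t, α₂ s = (ρ₂ s : ℂ) * Complex.exp (Complex.I * (θ₂ s : ℂ)) :=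
      Filter.eventually_of_mem (hIopen.mem_nhds ht) (fun s hs => hpolar₂ s hs)
    have h := polar_mul_conj' (hρθdiff t ht).2.1 (hρθdiff t ht).2.2.2 hpo
    rw [hd₂ t ht] at h
    have := congrArg Complex.im h.symm
    simpa [himRe t, hu t ht, ← Complex.ofReal_pow] using this
  have hθmono₁ : StrictMonoOn θ₁ I := by
    apply strictMonoOn_of_deriv_pos hconv
    · exact fun s hs => ((hρθdiff s hs).2.2.1.continuousAt).continuousWithinAt
    · intro x hx
      rw [hIopen.interior_eq] at hx
      have h := hθD₁ x hx
      have hρ := (hρpos x hx).1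
      nlinarith [hc₀pos]
  have hθmono₂ : StrictMonoOn θ₂ I := by
    apply strictMonoOn_of_deriv_pos hconv
    · exact fun s hs => ((hρθdiff s hs).2.2.2.continuousAt).continuousWithinAt
    · intro x hx
      rw [hIopen.interior_eq] at hx
      have h := hθD₂ x hx
      have hρ := (hρpos x hx).2
      nlinarith [hc₀pos]
  refine ⟨hθmono₁, hθmono₂, ?_⟩
  intro t ht ht0
  constructor
  · have h := hmin α₁ hn₁D t ht ht0
    rw [hinit₁, Complex.normSq_ofReal] at h
    have habs : Complex.normSq (α₁ t) = ‖α₁ t‖ ^ 2 := (Complex.sq_norm _).symm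
    rw [habs] at h
    nlinarith [norm_nonneg (α₁ t)]
  · have h := hmin α₂ hn₂D t ht ht0
    rw [hinit₂, Complex.normSq_ofReal] at h
    have habs : Complex.normSq (α₂ t) = ‖α₂ t‖ ^ 2 := (Complex.sq_norm _).symm
    rw [habs] at h
    nlinarith [norm_nonneg (α₂ t)]
end

section
/- Let γ = (γ₁, γ₂) : I' → ℂ² be a curve of type (6) with initial condition γ(0) = (b₁, b₂), and suppose ϱ_j : I' → (0, ∞) and ϑ_j : I' → ℝ are differentiable functions with γ_j(t) = ϱ_j(t)·exp(i·ϑ_j(t)) for j = 1, 2 and ϑ_j(0) = 0. Then for j = 1, 2 and all t ∈ I': ϱ_j'(t)·ϱ_j(t) = (−1)^{j−1}·ϱ₁(t)^{p+1}·ϱ₂(t)^{q+1}·sin((p+1)ϑ₁(t) + (q+1)ϑ₂(t)) and ϱ_j(t)²·ϑ_j'(t) = (−1)^{j−1}·b₁^{p+1}·b₂^{q+1}. -/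
open Complex in
lemma conj_polar (ρ θ : ℝ) :
    (starRingEnd ℂ) ((ρ:ℂ) * Complex.exp (Complex.I * θ)) =
      (ρ:ℂ) * Complex.exp (-(Complex.I * θ)) := by
  simp [← Complex.exp_conj, map_mul]

lemma exp_pow_neg (θ : ℝ) (n : ℕ) :
    (Complex.exp (-(Complex.I * θ)))^n = Complex.exp (-(Complex.I * (n*θ))) := by
  rw [← Complex.exp_nat_mul]; ring_nf

lemma helper (s d e ρ θ ρ₁ ρ₂ θ₁ θ₂ : ℝ) (n m : ℕ)
    (h : ((d:ℂ) + Complex.I*ρ*e) * Complex.exp (Complex.I*θ) *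
        (starRingEnd ℂ) ((ρ:ℂ)*Complex.exp (Complex.I*θ)) =
       (s:ℂ) * (Complex.I * ((starRingEnd ℂ) ((ρ₁:ℂ)*Complex.exp (Complex.I*θ₁)))^n *
        ((starRingEnd ℂ) ((ρ₂:ℂ)*Complex.exp (Complex.I*θ₂)))^m)) :
    d*ρ = s*(ρ₁^n*ρ₂^m*Real.sin (n*θ₁+m*θ₂)) ∧
    ρ^2*e = s*(ρ₁^n*ρ₂^m*Real.cos (n*θ₁+m*θ₂)) := by
  rw [conj_polar, conj_polar, conj_polar] at h
  have hL : ((d:ℂ) + Complex.I*ρ*e) * Complex.exp (Complex.I*θ) *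
      ((ρ:ℂ) * Complex.exp (-(Complex.I*θ))) = ((d:ℂ) + Complex.I*ρ*e) * ρ := by
    have : Complex.exp (Complex.I*θ) * Complex.exp (-(Complex.I*θ)) = 1 := by
      rw [← Complex.exp_add, add_neg_cancel, Complex.exp_zero]
    calc ((d:ℂ) + Complex.I*ρ*e) * Complex.exp (Complex.I*θ) *
        ((ρ:ℂ) * Complex.exp (-(Complex.I*θ)))
        = ((d:ℂ) + Complex.I*ρ*e) * ρ *
          (Complex.exp (Complex.I*θ) * Complex.exp (-(Complex.I*θ))) := by ring
      _ = _ := by rw [this, mul_one]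
  rw [hL] at h
  have hR : ((ρ₁:ℂ) * Complex.exp (-(Complex.I*θ₁)))^n *
      ((ρ₂:ℂ) * Complex.exp (-(Complex.I*θ₂)))^m =
      (ρ₁:ℂ)^n * (ρ₂:ℂ)^m *
        (↑(Real.cos (n*θ₁+m*θ₂)) - ↑(Real.sin (n*θ₁+m*θ₂)) * Complex.I) := by
    rw [mul_pow, mul_pow, exp_pow_neg, exp_pow_neg, mul_mul_mul_comm, ← Complex.exp_add]
    congr 1
    have : -(Complex.I * (↑n*↑θ₁)) + -(Complex.I * (↑m*↑θ₂)) =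
        (-((n:ℂ)*θ₁ + m*θ₂)) * Complex.I := by ring
    rw [this, Complex.exp_mul_I, Complex.cos_neg, Complex.sin_neg]
    push_cast
    ring
  set A := Real.cos ((n:ℝ)*θ₁+(m:ℝ)*θ₂) with hA
  set B := Real.sin ((n:ℝ)*θ₁+(m:ℝ)*θ₂) with hB
  set R := ρ₁^n*ρ₂^m with hRdef
  have h2 : ((d:ℂ) + Complex.I*ρ*e) * ρ = (s:ℂ) * (Complex.I * ((R:ℂ) *
      ((A:ℂ) - (B:ℂ) * Complex.I))) := by
    push_cast [hRdef]
    rw [← hR]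
    linear_combination h
  constructor
  · have := congrArg Complex.re h2
    simp only [Complex.mul_re, Complex.mul_im, Complex.add_re, Complex.add_im, Complex.sub_re,
      Complex.sub_im, Complex.I_re, Complex.I_im, Complex.ofReal_re, Complex.ofReal_im] at this
    linarith [this]
  · have := congrArg Complex.im h2
    simp only [Complex.mul_re, Complex.mul_im, Complex.add_re, Complex.add_im, Complex.sub_re,
      Complex.sub_im, Complex.I_re, Complex.I_im, Complex.ofReal_re, Complex.ofReal_im] at this
    nlinarith [this]

lemma polar_re (ρ₁ ρ₂ θ₁ θ₂ : ℝ) (n m : ℕ) :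
    (((ρ₁:ℂ) * Complex.exp (Complex.I*θ₁))^n * ((ρ₂:ℂ)*Complex.exp (Complex.I*θ₂))^m).re
      = ρ₁^n*ρ₂^m*Real.cos (n*θ₁+m*θ₂) := by
  have h1 : (Complex.exp (Complex.I*(θ₁:ℂ)))^n = Complex.exp (((n*θ₁ : ℝ):ℂ) * Complex.I) := by
    rw [← Complex.exp_nat_mul]; push_cast; ring_nf
  have h2 : (Complex.exp (Complex.I*(θ₂:ℂ)))^m = Complex.exp (((m*θ₂ : ℝ):ℂ) * Complex.I) := by
    rw [← Complex.exp_nat_mul]; push_cast; ring_nf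
  rw [mul_pow, mul_pow, h1, h2, mul_mul_mul_comm, ← Complex.exp_add, ← add_mul,
    ← Complex.ofReal_add, ← Complex.ofReal_pow, ← Complex.ofReal_pow, ← Complex.ofReal_mul]
  rw [Complex.mul_re, Complex.exp_ofReal_mul_I_re, Complex.exp_ofReal_mul_I_im,
    Complex.ofReal_re, Complex.ofReal_im]
  ring

lemma hasDerivAt_pow_comp {f : ℝ → ℂ} {f' : ℂ} {x : ℝ} (h : HasDerivAt f f' x) (n : ℕ) :
    HasDerivAt (fun s => f s ^ (n+1)) (((n:ℂ)+1) * f x ^ n * f') x := by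
  induction n with
  | zero => simpa using h
  | succ k ih =>
    have h2 : HasDerivAt (fun s => f s ^ (k+1) * f s)
        (((((k:ℂ))+1)*f x^k*f') * f x + f x^(k+1) * f') x := ih.mul h
    have heq : (fun s => f s ^ (k+1+1)) = fun s => f s^(k+1) * f s := by
      funext s; ring
    rw [heq]
    convert h2 using 1
    push_cast
    ring

/-- polar coordinates of a curve of type (6) satisfy equations (7) and (8). -/
theorem stmt_8 (p q : ℕ) (b₁ b₂ : ℝ) (hb₁ : 0 < b₁) (hb₂ : 0 < b₂)
    (I' : Set ℝ) (hIopen : IsOpen I') (hIconn : I'.OrdConnected) (hI0 : (0 : ℝ) ∈ I')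
    (γ₁ γ₂ : ℝ → ℂ)
    (hγne : ∀ t ∈ I', γ₁ t ≠ 0 ∧ γ₂ t ≠ 0)
    (hγdiff : ∀ t ∈ I', DifferentiableAt ℝ γ₁ t ∧ DifferentiableAt ℝ γ₂ t)
    (hγode₁ : ∀ t ∈ I', deriv γ₁ t * (starRingEnd ℂ) (γ₁ t) =
      Complex.I * ((starRingEnd ℂ) (γ₁ t)) ^ (p + 1) * ((starRingEnd ℂ) (γ₂ t)) ^ (q + 1))
    (hγode₂ : ∀ t ∈ I', deriv γ₂ t * (starRingEnd ℂ) (γ₂ t) =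
      -(Complex.I * ((starRingEnd ℂ) (γ₁ t)) ^ (p + 1) * ((starRingEnd ℂ) (γ₂ t)) ^ (q + 1)))
    (hγinit₁ : γ₁ 0 = (b₁ : ℂ)) (hγinit₂ : γ₂ 0 = (b₂ : ℂ))
    (ϱ₁ ϱ₂ ϑ₁ ϑ₂ : ℝ → ℝ)
    (hϱpos : ∀ t ∈ I', 0 < ϱ₁ t ∧ 0 < ϱ₂ t)
    (hϱϑdiff : ∀ t ∈ I', DifferentiableAt ℝ ϱ₁ t ∧ DifferentiableAt ℝ ϱ₂ t ∧
      DifferentiableAt ℝ ϑ₁ t ∧ DifferentiableAt ℝ ϑ₂ t)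
    (hpolar₁ : ∀ t ∈ I', γ₁ t = (ϱ₁ t : ℂ) * Complex.exp (Complex.I * (ϑ₁ t : ℂ)))
    (hpolar₂ : ∀ t ∈ I', γ₂ t = (ϱ₂ t : ℂ) * Complex.exp (Complex.I * (ϑ₂ t : ℂ)))
    (hϑ₁0 : ϑ₁ 0 = 0) (hϑ₂0 : ϑ₂ 0 = 0) :
    ∀ t ∈ I',
      (deriv ϱ₁ t * ϱ₁ t =
        ϱ₁ t ^ (p + 1) * ϱ₂ t ^ (q + 1) * Real.sin (((p : ℝ) + 1) * ϑ₁ t + ((q : ℝ) + 1) * ϑ₂ t)) ∧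
      (deriv ϱ₂ t * ϱ₂ t =
        -(ϱ₁ t ^ (p + 1) * ϱ₂ t ^ (q + 1) * Real.sin (((p : ℝ) + 1) * ϑ₁ t + ((q : ℝ) + 1) * ϑ₂ t))) ∧
      (ϱ₁ t ^ 2 * deriv ϑ₁ t = b₁ ^ (p + 1) * b₂ ^ (q + 1)) ∧
      (ϱ₂ t ^ 2 * deriv ϑ₂ t = -(b₁ ^ (p + 1) * b₂ ^ (q + 1))) := by
  -- the conserved quantity
  set g : ℝ → ℝ := fun s => ((γ₁ s) ^ (p+1) * (γ₂ s) ^ (q+1)).re with hg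
  -- γ₁, γ₂ never vanish implies their conjugates don't either
  have hg0 : ∀ x ∈ I', HasDerivAt g 0 x := by
    intro x hx
    have hc₁ : (starRingEnd ℂ) (γ₁ x) ≠ 0 := by simpa using (hγne x hx).1
    have hc₂ : (starRingEnd ℂ) (γ₂ x) ≠ 0 := by simpa using (hγne x hx).2
    have d1 : deriv γ₁ x = Complex.I * ((starRingEnd ℂ) (γ₁ x)) ^ p *
        ((starRingEnd ℂ) (γ₂ x)) ^ (q+1) := by
      apply mul_right_cancel₀ hc₁
      rw [hγode₁ x hx]; ring
    have d2 : deriv γ₂ x = -(Complex.I * ((starRingEnd ℂ) (γ₁ x)) ^ (p+1) *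
        ((starRingEnd ℂ) (γ₂ x)) ^ q) := by
      apply mul_right_cancel₀ hc₂
      rw [hγode₂ x hx]; ring
    have hG : HasDerivAt (fun s => (γ₁ s) ^ (p+1) * (γ₂ s) ^ (q+1))
        ((((p:ℂ)+1) * γ₁ x ^ p * deriv γ₁ x) * γ₂ x ^ (q+1)
          + γ₁ x ^ (p+1) * (((q:ℂ)+1) * γ₂ x ^ q * deriv γ₂ x)) x := by
      exact (hasDerivAt_pow_comp (hγdiff x hx).1.hasDerivAt p).mul
        (hasDerivAt_pow_comp (hγdiff x hx).2.hasDerivAt q)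
    have m1 : ((Complex.normSq (γ₁ x) : ℝ) : ℂ) = γ₁ x * (starRingEnd ℂ) (γ₁ x) :=
      (Complex.mul_conj _).symm
    have m2 : ((Complex.normSq (γ₂ x) : ℝ) : ℂ) = γ₂ x * (starRingEnd ℂ) (γ₂ x) :=
      (Complex.mul_conj _).symm
    have hD : ((((p:ℂ)+1) * γ₁ x ^ p * deriv γ₁ x) * γ₂ x ^ (q+1)
          + γ₁ x ^ (p+1) * (((q:ℂ)+1) * γ₂ x ^ q * deriv γ₂ x))
        = Complex.I * ((((p:ℝ)+1) * Complex.normSq (γ₁ x) ^ p * Complex.normSq (γ₂ x) ^ (q+1)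
            - ((q:ℝ)+1) * Complex.normSq (γ₁ x) ^ (p+1) * Complex.normSq (γ₂ x) ^ q : ℝ) : ℂ) := by
      rw [d1, d2]
      push_cast
      rw [m1, m2]
      ring
    rw [hD] at hG
    have hre := Complex.reCLM.hasFDerivAt.comp_hasDerivAt x hG
    have hval : Complex.reCLM (Complex.I *
        ((((p:ℝ)+1) * Complex.normSq (γ₁ x) ^ p * Complex.normSq (γ₂ x) ^ (q+1)
          - ((q:ℝ)+1) * Complex.normSq (γ₁ x) ^ (p+1) * Complex.normSq (γ₂ x) ^ q : ℝ) : ℂ)) = 0 := by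
      simp [Complex.mul_re, ← Complex.ofReal_pow]
    rw [hval] at hre
    exact hre
  -- g is constant, equal to its value at 0
  have hgconst : ∀ x ∈ I', g x = b₁ ^ (p+1) * b₂ ^ (q+1) := by
    intro x hx
    have hdiffOn : DifferentiableOn ℝ g I' := fun y hy =>
      (hg0 y hy).differentiableAt.differentiableWithinAt
    have hfz : ∀ y ∈ I', fderivWithin ℝ g I' y = 0 := by
      intro y hy
      rw [fderivWithin_of_isOpen hIopen hy, (hg0 y hy).hasFDerivAt.fderiv]
      ext
      simp
    have := (convex_iff_ordConnected.mpr hIconn).is_const_of_fderivWithin_eq_zero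
      hdiffOn hfz hx hI0
    rw [this, hg]
    simp only [hγinit₁, hγinit₂, ← Complex.ofReal_pow, ← Complex.ofReal_mul, Complex.ofReal_re]
  intro t ht
  -- derivatives of γ via polar coordinates
  have hder : ∀ (ϱ ϑ : ℝ → ℝ) (γ : ℝ → ℂ), DifferentiableAt ℝ ϱ t → DifferentiableAt ℝ ϑ t →
      (∀ s ∈ I', γ s = (ϱ s : ℂ) * Complex.exp (Complex.I * (ϑ s : ℂ))) →
      deriv γ t = (↑(deriv ϱ t)) * Complex.exp (Complex.I * ↑(ϑ t))
        + (↑(ϱ t)) * (Complex.exp (Complex.I * ↑(ϑ t)) * (Complex.I * ↑(deriv ϑ t))) := by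
    intro ϱ ϑ γ hϱ hϑ hpol
    have h1 : HasDerivAt (fun s => ((ϱ s : ℝ) : ℂ)) (↑(deriv ϱ t)) t :=
      (hϱ.hasDerivAt).ofReal_comp
    have h2 : HasDerivAt (fun s => Complex.I * ((ϑ s : ℝ) : ℂ)) (Complex.I * ↑(deriv ϑ t)) t :=
      ((hϑ.hasDerivAt).ofReal_comp).const_mul Complex.I
    have hF := h1.mul h2.cexp
    have hev : γ =ᶠ[nhds t] fun s => (ϱ s : ℂ) * Complex.exp (Complex.I * (ϑ s : ℂ)) := by
      filter_upwards [hIopen.mem_nhds ht] with s hs using hpol s hs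
    exact (hF.congr_of_eventuallyEq hev).deriv
  have hd₁ := hder ϱ₁ ϑ₁ γ₁ (hϱϑdiff t ht).1 (hϱϑdiff t ht).2.2.1 hpolar₁
  have hd₂ := hder ϱ₂ ϑ₂ γ₂ (hϱϑdiff t ht).2.1 (hϱϑdiff t ht).2.2.2 hpolar₂
  -- equations from the ODE in polar form
  have hode₁ := hγode₁ t ht
  have hode₂ := hγode₂ t ht
  rw [hd₁, hpolar₁ t ht, hpolar₂ t ht] at hode₁
  rw [hd₂, hpolar₁ t ht, hpolar₂ t ht] at hode₂
  have h₁ : (((deriv ϱ₁ t : ℝ) : ℂ) + Complex.I * (ϱ₁ t) * ((deriv ϑ₁ t : ℝ) : ℂ)) *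
        Complex.exp (Complex.I * (ϑ₁ t)) *
        (starRingEnd ℂ) ((ϱ₁ t : ℂ) * Complex.exp (Complex.I * (ϑ₁ t))) =
      ((1:ℝ) : ℂ) * (Complex.I *
        ((starRingEnd ℂ) ((ϱ₁ t : ℂ) * Complex.exp (Complex.I * (ϑ₁ t)))) ^ (p+1) *
        ((starRingEnd ℂ) ((ϱ₂ t : ℂ) * Complex.exp (Complex.I * (ϑ₂ t)))) ^ (q+1)) := by
    push_cast
    linear_combination hode₁
  have h₂ : (((deriv ϱ₂ t : ℝ) : ℂ) + Complex.I * (ϱ₂ t) * ((deriv ϑ₂ t : ℝ) : ℂ)) *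
        Complex.exp (Complex.I * (ϑ₂ t)) *
        (starRingEnd ℂ) ((ϱ₂ t : ℂ) * Complex.exp (Complex.I * (ϑ₂ t))) =
      ((-1:ℝ) : ℂ) * (Complex.I *
        ((starRingEnd ℂ) ((ϱ₁ t : ℂ) * Complex.exp (Complex.I * (ϑ₁ t)))) ^ (p+1) *
        ((starRingEnd ℂ) ((ϱ₂ t : ℂ) * Complex.exp (Complex.I * (ϑ₂ t)))) ^ (q+1)) := by
    push_cast
    linear_combination hode₂
  obtain ⟨e7a, e8a⟩ := helper 1 (deriv ϱ₁ t) (deriv ϑ₁ t) (ϱ₁ t) (ϑ₁ t)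
    (ϱ₁ t) (ϱ₂ t) (ϑ₁ t) (ϑ₂ t) (p+1) (q+1) h₁
  obtain ⟨e7b, e8b⟩ := helper (-1) (deriv ϱ₂ t) (deriv ϑ₂ t) (ϱ₂ t) (ϑ₂ t)
    (ϱ₁ t) (ϱ₂ t) (ϑ₁ t) (ϑ₂ t) (p+1) (q+1) h₂
  push_cast at e7a e8a e7b e8b
  -- the value of g at t in polar coordinates
  have hgt : g t = ϱ₁ t ^ (p+1) * ϱ₂ t ^ (q+1) *
      Real.cos (((p:ℝ)+1) * ϑ₁ t + ((q:ℝ)+1) * ϑ₂ t) := by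
    have := polar_re (ϱ₁ t) (ϱ₂ t) (ϑ₁ t) (ϑ₂ t) (p+1) (q+1)
    push_cast at this
    rw [hg]
    simp only [hpolar₁ t ht, hpolar₂ t ht]
    exact this
  have hgb := hgconst t ht
  refine ⟨by linarith [e7a], by linarith [e7b], ?_, ?_⟩
  · rw [e8a, ← hgt, hgb]; ring
  · rw [e8b, ← hgt, hgb]; ring
end
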